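/- arXiv:2512.00764 — 3 statements merged into one kernel-verified Lean document; each statement's English description precedes it below -/
import Mathlib

section
/- Let b, s ∈ ℝ and K > 0. There exist ε₁ > 0 and C* > 0 such that for every ε ∈ (0, ε₁], every ω ∈ (−1/2, 1/2), and every smooth 2π-periodic q : ℝ → ℝ with sup_{x∈ℝ}|q(x)| ≤ Kε, the following holds: if σ = (σ₁,σ₂) ∈ [−1/2, 0] × [0, ∞) is such that the Bloch operator B(ε,ω,σ) built from q has an eigenvalue λ ≥ 0, then dist(σ, S₀) < C*·√ε, where S₀ := {σ ∈ [−1/2,0]×[0,∞) : σ₁² + σ₂² = 1, or (σ₁+1)² + σ₂² = 1, or (σ₁−1)² + σ₂² = 1}. -/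
open Real MeasureTheory

noncomputable section

/-- The operator `𝒟W := W + (1+2εω)(W'' + 2iσ₁W' − σ₁²W) − σ₂²W`. -/
def blochD (ε ω σ₁ σ₂ : ℝ) (W : ℝ → ℂ) : ℝ → ℂ :=
  fun x =>
    W x + ((1 : ℂ) + 2 * (ε : ℂ) * (ω : ℂ)) *
        (iteratedDeriv 2 W x + 2 * Complex.I * (σ₁ : ℂ) * deriv W x - (σ₁ : ℂ) ^ 2 * W x)
      - (σ₂ : ℂ) ^ 2 * W x

/-- The Bloch operator `B(ε,ω,σ)W = −𝒟(𝒟W) + qW` with potential `q`. -/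
def blochB (ε ω σ₁ σ₂ : ℝ) (q : ℝ → ℝ) (W : ℝ → ℂ) : ℝ → ℂ :=
  fun x => -blochD ε ω σ₁ σ₂ (blochD ε ω σ₁ σ₂ W) x + (q x : ℂ) * W x

/-- `lam` is an eigenvalue of the Bloch operator `B(ε,ω,σ)`: there is a nonzero smooth
`2π`-periodic eigenfunction. -/
def IsBlochEigenvalue (ε ω σ₁ σ₂ : ℝ) (q : ℝ → ℝ) (lam : ℝ) : Prop :=
  ∃ W : ℝ → ℂ, ContDiff ℝ (⊤ : ℕ∞) W ∧ (∀ x, W (x + 2 * π) = W x) ∧ W ≠ 0 ∧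
    ∀ x, blochB ε ω σ₁ σ₂ q W x = (lam : ℂ) * W x

/-- The set `S₀` of critical Bloch wave vectors. -/
def S0 : Set (ℝ × ℝ) :=
  {σ : ℝ × ℝ | σ.1 ∈ Set.Icc (-(1 : ℝ) / 2) 0 ∧ 0 ≤ σ.2 ∧
    (σ.1 ^ 2 + σ.2 ^ 2 = 1 ∨ (σ.1 + 1) ^ 2 + σ.2 ^ 2 = 1 ∨ (σ.1 - 1) ^ 2 + σ.2 ^ 2 = 1)}


namespace BlochAux
open Complex intervalIntegral AddCircle
open scoped ENNReal

local instance : Fact ((0:ℝ) < 2 * π) := ⟨by linarith [Real.pi_pos]⟩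

lemma hab : (0:ℝ) < 0 + 2*π := by linarith [Real.pi_pos]

/-- Fourier coefficients on `[0, 2π]`. -/
def fc (U : ℝ → ℂ) (n : ℤ) : ℂ := fourierCoeffOn hab U n

/-- the symbol of `blochD` on the `n`-th Fourier mode -/
def mSym (ε ω σ₁ σ₂ : ℝ) (n : ℤ) : ℝ := 1 - (1+2*ε*ω)*((n:ℝ)+σ₁)^2 - σ₂^2

lemma per_deriv {U : ℝ → ℂ} (hp : ∀ x, U (x + 2*π) = U x) (x : ℝ) :
    deriv U (x + 2*π) = deriv U x := by
  have h1 : (fun y => U (y + 2*π)) = U := funext fun y => hp y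
  rw [← deriv_comp_add_const U (2*π) x, h1]

lemma contDiff_deriv {U : ℝ → ℂ} (hU : ContDiff ℝ (⊤:ℕ∞) U) : ContDiff ℝ (⊤:ℕ∞) (deriv U) :=
  (contDiff_infty_iff_deriv.mp hU).2

lemma fc_deriv {U : ℝ → ℂ} (hU : ContDiff ℝ (⊤:ℕ∞) U) (hp : ∀ x, U (x + 2*π) = U x) (n : ℤ) :
    fc (deriv U) n = (n : ℂ) * Complex.I * fc U n := by
  rcases eq_or_ne n 0 with rfl | hn
  · have : fc (deriv U) 0 = (1 / ((0 + 2*π) - 0) : ℝ) • ∫ x in (0:ℝ)..(0+2*π),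
        fourier (-0) (x : AddCircle ((0+2*π) - 0)) • deriv U x := fourierCoeffOn_eq_integral _ 0 hab
    rw [this]
    simp only [neg_zero, fourier_zero, one_smul]
    rw [intervalIntegral.integral_deriv_eq_sub
      (fun x _ => (hU.differentiable (by simp) x))
      (((contDiff_deriv hU).continuous).intervalIntegrable _ _)]
    rw [hp 0]
    simp
  · have key := fourierCoeffOn_of_hasDerivAt hab hn
      (f := U) (f' := deriv U)
      (fun x _ => (hU.differentiable (by simp) x).hasDerivAt)
      (((contDiff_deriv hU).continuous).intervalIntegrable _ _)
    have hU0 : U (0 + 2*π) = U 0 := hp 0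
    rw [hU0, sub_self, mul_zero, zero_sub] at key
    have hπ : (π : ℂ) ≠ 0 := Complex.ofReal_ne_zero.mpr Real.pi_ne_zero
    have hnC : (n : ℂ) ≠ 0 := Int.cast_ne_zero.mpr hn
    have hI := Complex.I_ne_zero
    unfold fc
    rw [key]
    push_cast
    field_simp
    ring

lemma fc_add {U V : ℝ → ℂ} (hU : Continuous U) (hV : Continuous V) (n : ℤ) :
    fc (fun x => U x + V x) n = fc U n + fc V n := by
  unfold fc
  rw [fourierCoeffOn_eq_integral _ n hab, fourierCoeffOn_eq_integral _ n hab,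
    fourierCoeffOn_eq_integral _ n hab, ← smul_add]
  congr 1
  rw [← intervalIntegral.integral_add]
  · congr 1; ext x; rw [smul_add]
  · exact (((map_continuous (fourier (-n))).comp
      (AddCircle.continuous_mk' _)).smul hU).intervalIntegrable _ _
  · exact (((map_continuous (fourier (-n))).comp
      (AddCircle.continuous_mk' _)).smul hV).intervalIntegrable _ _

lemma fc_const_mul (U : ℝ → ℂ) (c : ℂ) (n : ℤ) :
    fc (fun x => c * U x) n = c * fc U n := fourierCoeffOn.const_mul U c n hab

lemma blochD_eq (ε ω σ₁ σ₂ : ℝ) (U : ℝ → ℂ) : blochD ε ω σ₁ σ₂ U = fun x =>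
      (((1:ℂ) - ((1:ℂ)+2*ε*ω)*(σ₁:ℂ)^2 - (σ₂:ℂ)^2) * U x
        + (((1:ℂ)+2*ε*ω) * (2*Complex.I*σ₁)) * deriv U x)
        + ((1:ℂ)+2*ε*ω) * deriv (deriv U) x := by
  have hit : iteratedDeriv 2 U = deriv (deriv U) := by
    rw [iteratedDeriv_succ, iteratedDeriv_one]
  funext x; simp only [blochD, hit]; ring

lemma fc_D (ε ω σ₁ σ₂ : ℝ) {U : ℝ → ℂ} (hU : ContDiff ℝ (⊤:ℕ∞) U)
    (hp : ∀ x, U (x + 2*π) = U x) (n : ℤ) :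
    fc (blochD ε ω σ₁ σ₂ U) n = (mSym ε ω σ₁ σ₂ n : ℂ) * fc U n := by
  have hU' : ContDiff ℝ (⊤:ℕ∞) (deriv U) := contDiff_deriv hU
  have hU'' : ContDiff ℝ (⊤:ℕ∞) (deriv (deriv U)) := contDiff_deriv hU'
  have c0 : Continuous U := hU.continuous
  have c1 : Continuous (deriv U) := hU'.continuous
  have c2 : Continuous (deriv (deriv U)) := hU''.continuous
  rw [blochD_eq]
  rw [fc_add (by continuity) (by continuity), fc_add (by continuity) (by continuity),
    fc_const_mul, fc_const_mul, fc_const_mul,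
    fc_deriv hU hp, fc_deriv hU' (fun x => per_deriv hp x)]
  rw [fc_deriv hU hp]
  unfold mSym
  push_cast
  linear_combination (((1:ℂ)+2*(ε:ℂ)*ω) * (2*(σ₁:ℂ)*(n:ℂ) + (n:ℂ)^2)) * (fc U n) * Complex.I_sq

lemma blochD_smooth (ε ω σ₁ σ₂ : ℝ) {U : ℝ → ℂ} (hU : ContDiff ℝ (⊤:ℕ∞) U) :
    ContDiff ℝ (⊤:ℕ∞) (blochD ε ω σ₁ σ₂ U) := by
  have hU' : ContDiff ℝ (⊤:ℕ∞) (deriv U) := contDiff_deriv hU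
  have hU'' : ContDiff ℝ (⊤:ℕ∞) (deriv (deriv U)) := contDiff_deriv hU'
  rw [blochD_eq]
  exact ((contDiff_const.mul hU).add (contDiff_const.mul hU')).add (contDiff_const.mul hU'')

lemma blochD_periodic (ε ω σ₁ σ₂ : ℝ) {U : ℝ → ℂ} (hp : ∀ x, U (x + 2*π) = U x) (x : ℝ) :
    blochD ε ω σ₁ σ₂ U (x + 2*π) = blochD ε ω σ₁ σ₂ U x := by
  rw [blochD_eq]
  simp only [hp x, per_deriv hp x, per_deriv (fun y => per_deriv hp y) x]

lemma coeff_eig {ε ω σ₁ σ₂ lam : ℝ} {q : ℝ → ℝ} {W : ℝ → ℂ}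
    (hW : ContDiff ℝ (⊤:ℕ∞) W) (hp : ∀ x, W (x + 2*π) = W x) (hq : Continuous q)
    (heig : ∀ x, blochB ε ω σ₁ σ₂ q W x = (lam : ℂ) * W x) (n : ℤ) :
    fc (fun x => (q x : ℂ) * W x) n
      = ((lam : ℂ) + (mSym ε ω σ₁ σ₂ n : ℂ)^2) * fc W n := by
  set D := blochD ε ω σ₁ σ₂ W with hD
  have hDs : ContDiff ℝ (⊤:ℕ∞) D := blochD_smooth _ _ _ _ hW
  have hDp : ∀ x, D (x + 2*π) = D x := fun x => blochD_periodic _ _ _ _ hp x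
  have hDDs : ContDiff ℝ (⊤:ℕ∞) (blochD ε ω σ₁ σ₂ D) := blochD_smooth _ _ _ _ hDs
  have h1 : (fun x => (q x : ℂ) * W x)
      = fun x => (lam : ℂ) * W x + blochD ε ω σ₁ σ₂ D x := by
    funext x
    have := heig x
    simp only [blochB] at this
    rw [← this, ← hD]; ring
  rw [h1, fc_add (U := fun x => (lam : ℂ) * W x) (continuous_const.mul hW.continuous) hDDs.continuous,
    fc_const_mul, fc_D ε ω σ₁ σ₂ hDs hDp, fc_D ε ω σ₁ σ₂ hW hp]
  ring

/-- continuous lift to the circle -/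
def CF (f : ℝ → ℂ) (hc : Continuous f) (hp : ∀ x, f (x + 2*π) = f x) :
    C(AddCircle (2*π), ℂ) :=
  ⟨AddCircle.liftIco (2*π) 0 f,
    AddCircle.liftIco_continuous (by simpa using (hp 0).symm) hc.continuousOn⟩

lemma fc_eq_fourierCoeff {f : ℝ → ℂ} (hc : Continuous f) (hp : ∀ x, f (x + 2*π) = f x) (n : ℤ) :
    fourierCoeff (⇑(CF f hc hp)) n = fc f n :=
  fourierCoeff_liftIco_eq f n

lemma CF_eval {f : ℝ → ℂ} (hc : Continuous f) (hp : ∀ x, f (x + 2*π) = f x) (x : ℝ) :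
    CF f hc hp (x : AddCircle (2*π)) = f x := by
  have h2 : (0:ℝ) < 2*π := by linarith [Real.pi_pos]
  have hper : Function.Periodic f (2*π) := hp
  have hmem := toIcoMod_mem_Ico h2 0 x
  have hcoe : ((toIcoMod h2 0 x : ℝ) : AddCircle (2*π)) = (x : AddCircle (2*π)) := by
    show QuotientAddGroup.mk _ = _
    rw [toIcoMod]
    rw [QuotientAddGroup.mk_sub]
    have : ((toIcoDiv h2 0 x • (2*π) : ℝ) : AddCircle (2*π)) = 0 := by
      rw [AddCircle.coe_zsmul, AddCircle.coe_period, smul_zero]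
    rw [this, sub_zero]
  rw [← hcoe]
  show AddCircle.liftIco (2*π) 0 f _ = f x
  rw [AddCircle.liftIco_coe_apply hmem, toIcoMod]
  exact hper.sub_zsmul_eq _

lemma integrable_sq_norm (g : C(AddCircle (2*π), ℂ)) :
    Integrable (fun t => ‖g t‖^2) (haarAddCircle) := by
  have : Continuous (fun t => ‖g t‖^2) := (g.continuous.norm).pow 2
  exact this.integrable_of_hasCompactSupport (HasCompactSupport.of_compactSpace _)

lemma parseval_cont (g : C(AddCircle (2*π), ℂ)) :
    Summable (fun n : ℤ => ‖fourierCoeff (⇑g) n‖^2) ∧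
    ∑' n : ℤ, ‖fourierCoeff (⇑g) n‖^2 = ∫ t, ‖g t‖^2 ∂(haarAddCircle) := by
  set F := ContinuousMap.toLp (E := ℂ) 2 haarAddCircle ℂ g with hF
  have hcoeff : ∀ n, fourierCoeff (F : AddCircle (2*π) → ℂ) n = fourierCoeff (⇑g) n :=
    fun n => fourierCoeff_toLp g n
  constructor
  · have hm : Memℓp (fun n => fourierBasis.repr F n) 2 := lp.memℓp _
    have hs := hm.summable (by norm_num)
    have : (fun n : ℤ => ‖fourierBasis.repr F n‖ ^ (2:ℝ≥0∞).toReal)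
        = fun n : ℤ => ‖fourierCoeff (⇑g) n‖^2 := by
      funext n
      rw [fourierBasis_repr, hcoeff n]
      norm_num [Real.rpow_natCast]
    rwa [this] at hs
  · have := tsum_sq_fourierCoeff F
    simp_rw [hcoeff] at this
    rw [this]
    apply MeasureTheory.integral_congr_ae
    filter_upwards [ContinuousMap.coeFn_toLp (p := 2) (μ := haarAddCircle) (𝕜 := ℂ) g] with t ht
    rw [ht]

lemma eq_zero_of_integral_sq_norm (g : C(AddCircle (2*π), ℂ))
    (h : ∫ t, ‖g t‖^2 ∂(haarAddCircle) = 0) : ∀ t, g t = 0 := by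
  by_contra hne
  push_neg at hne
  obtain ⟨t₀, ht₀⟩ := hne
  have hpos : 0 < ∫ t, ‖g t‖^2 ∂(haarAddCircle) := by
    rw [integral_pos_iff_support_of_nonneg (fun t => by positivity) (integrable_sq_norm g)]
    have hopen : IsOpen {t | g t ≠ 0} := isOpen_ne.preimage g.continuous
    have hsub : {t | g t ≠ 0} ⊆ Function.support (fun t => ‖g t‖^2) := by
      intro t ht
      simp only [Function.mem_support]
      exact pow_ne_zero _ (norm_ne_zero_iff.mpr ht)
    calc (0:ℝ≥0∞) < haarAddCircle {t | g t ≠ 0} := hopen.measure_pos _ ⟨t₀, ht₀⟩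
      _ ≤ _ := measure_mono hsub
  rw [h] at hpos; exact lt_irrefl _ hpos

theorem exists_mode {ε ω σ₁ σ₂ K lam : ℝ} {q : ℝ → ℝ} {W : ℝ → ℂ}
    (hW : ContDiff ℝ (⊤:ℕ∞) W) (hpW : ∀ x, W (x + 2*π) = W x) (hWne : W ≠ 0)
    (hq : Continuous q) (hqp : ∀ x, q (x + 2*π) = q x) (hqb : ∀ x, |q x| ≤ K*ε)
    (hlam : 0 ≤ lam)
    (heig : ∀ x, blochB ε ω σ₁ σ₂ q W x = (lam : ℂ) * W x) :
    ∃ n : ℤ, (mSym ε ω σ₁ σ₂ n)^2 ≤ K*ε := by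
  by_contra hcon
  push_neg at hcon
  have hKε : 0 ≤ K * ε := (abs_nonneg _).trans (hqb 0)
  have hcW : Continuous W := hW.continuous
  have hcQ : Continuous (fun x => (q x : ℂ) * W x) :=
    (Complex.continuous_ofReal.comp hq).mul hcW
  have hpQ : ∀ x, (fun x => (q x : ℂ) * W x) (x + 2*π) = (fun x => (q x : ℂ) * W x) x := by
    intro x; simp only [hqp x, hpW x]
  obtain ⟨hsumW, hPW⟩ := parseval_cont (CF W hcW hpW)
  obtain ⟨hsumQ, hPQ⟩ := parseval_cont (CF (fun x => (q x : ℂ) * W x) hcQ hpQ)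
  simp only [fc_eq_fourierCoeff] at hsumW hPW hsumQ hPQ
  have hrel : ∀ n : ℤ, ‖fc (fun x => (q x : ℂ) * W x) n‖^2
      = (lam + (mSym ε ω σ₁ σ₂ n)^2)^2 * ‖fc W n‖^2 := by
    intro n
    rw [coeff_eig hW hpW hq heig n]
    rw [norm_mul, mul_pow]
    congr 1
    have : ((lam : ℂ) + (mSym ε ω σ₁ σ₂ n : ℂ)^2) = ((lam + (mSym ε ω σ₁ σ₂ n)^2 : ℝ) : ℂ) := by
      push_cast; ring
    rw [this, Complex.norm_real, Real.norm_eq_abs]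
    exact sq_abs _
  have hint : ∫ t, ‖(CF (fun x => (q x : ℂ) * W x) hcQ hpQ) t‖^2 ∂(haarAddCircle)
      ≤ (K*ε)^2 * ∫ t, ‖(CF W hcW hpW) t‖^2 ∂(haarAddCircle) := by
    rw [← MeasureTheory.integral_const_mul]
    refine integral_mono (integrable_sq_norm _) ((integrable_sq_norm (CF W hcW hpW)).const_mul _) ?_
    intro t
    obtain ⟨x, rfl⟩ := QuotientAddGroup.mk_surjective t
    show ‖(CF (fun x => (q x : ℂ) * W x) hcQ hpQ) (x : AddCircle (2*π))‖^2
        ≤ (K*ε)^2 * ‖(CF W hcW hpW) (x : AddCircle (2*π))‖^2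
    rw [CF_eval, CF_eval]
    rw [norm_mul, mul_pow, Complex.norm_real, Real.norm_eq_abs]
    have h1 : |q x|^2 ≤ (K*ε)^2 := by
      have := hqb x
      nlinarith [abs_nonneg (q x)]
    nlinarith [norm_nonneg (W x), sq_nonneg (‖W x‖)]
  by_cases hA : ∀ n : ℤ, fc W n = 0
  · have h0 : ∑' n : ℤ, ‖fc W n‖^2 = 0 := by
      have he : (fun n : ℤ => ‖fc W n‖^2) = fun _ => (0:ℝ) := by
        funext n; rw [hA n]; simp
      rw [he, tsum_zero]
    have hW0 := eq_zero_of_integral_sq_norm (CF W hcW hpW) (by rw [← hPW, h0])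
    apply hWne
    funext x
    have := hW0 (x : AddCircle (2*π))
    rwa [CF_eval] at this
  · push_neg at hA
    obtain ⟨n₀, hn₀⟩ := hA
    have hle : ∀ n : ℤ, (K*ε)^2 * ‖fc W n‖^2 ≤ ‖fc (fun x => (q x : ℂ) * W x) n‖^2 := by
      intro n
      rw [hrel n]
      have h1 : K*ε ≤ lam + (mSym ε ω σ₁ σ₂ n)^2 := by nlinarith [hcon n]
      exact mul_le_mul_of_nonneg_right (pow_le_pow_left₀ hKε h1 2) (sq_nonneg _)
    have hlt : (K*ε)^2 * ‖fc W n₀‖^2 < ‖fc (fun x => (q x : ℂ) * W x) n₀‖^2 := by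
      rw [hrel n₀]
      have h1 : K*ε < lam + (mSym ε ω σ₁ σ₂ n₀)^2 := by nlinarith [hcon n₀]
      have h2 : 0 < ‖fc W n₀‖^2 := pow_pos (norm_pos_iff.mpr hn₀) 2
      exact mul_lt_mul_of_pos_right (by nlinarith : (K*ε)^2 < (lam + (mSym ε ω σ₁ σ₂ n₀)^2)^2) h2
    have hsum1 : Summable (fun n : ℤ => (K*ε)^2 * ‖fc W n‖^2) := hsumW.mul_left _
    have := Summable.tsum_lt_tsum hle hlt hsum1 hsumQ
    rw [tsum_mul_left, hPW, hPQ] at this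
    exact absurd hint (not_le.mpr this)

lemma abs_diff_le {u v δ : ℝ} (hu : 0 ≤ u) (hv : 0 ≤ v) (hsum : 1/2 ≤ u + v)
    (h : |u^2 - v^2| ≤ δ) : |u - v| ≤ 2*δ := by
  have h1 : |u - v| * (u + v) = |u^2 - v^2| := by
    rw [← _root_.abs_of_nonneg (by linarith : (0:ℝ) ≤ u + v), ← abs_mul]
    congr 1; ring
  nlinarith [abs_nonneg (u - v)]

lemma one_sub_sqrt_le {u : ℝ} (h0 : 0 ≤ u) (h1 : u ≤ 1) : 1 - Real.sqrt (1-u) ≤ u := by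
  nlinarith [Real.sq_sqrt (by linarith : (0:ℝ) ≤ 1-u), Real.sqrt_nonneg (1-u),
    Real.sqrt_le_one.2 (by linarith : 1-u ≤ 1)]

lemma sqrt_ge_half {u : ℝ} (h : 1/4 ≤ u) : 1/2 ≤ Real.sqrt u := by
  have := Real.sqrt_le_sqrt h
  rwa [show (1:ℝ)/4 = (1/2)^2 by norm_num, Real.sqrt_sq (by norm_num)] at this

lemma sqrt_le_one' {u : ℝ} (h : u ≤ 1) : Real.sqrt u ≤ 1 := by
  exact Real.sqrt_le_one.2 h

set_option maxHeartbeats 1000000 in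
lemma geom {σ₁ σ₂ δ : ℝ} {n : ℤ} (hn1 : -1 ≤ n) (hn2 : n ≤ 1)
    (hs1 : σ₁ ∈ Set.Icc (-(1:ℝ)/2) 0) (hs2 : 0 ≤ σ₂) (hδ0 : 0 ≤ δ) (hδ : δ ≤ 1/4)
    (hr : |((n:ℝ) + σ₁)^2 + σ₂^2 - 1| ≤ δ) :
    ∃ τ ∈ S0, Real.sqrt ((σ₁ - τ.1)^2 + (σ₂ - τ.2)^2) ≤ 2*δ := by
  obtain ⟨hs1a, hs1b⟩ := hs1
  have habs := abs_le.mp hr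
  interval_cases n
  · -- n = -1
    push_cast at habs
    have hsq1 : 1 ≤ (σ₁ - 1)^2 := by nlinarith
    have hσ2 : σ₂^2 ≤ δ := by nlinarith
    have hσ1 : -2*σ₁ ≤ δ := by nlinarith
    have hu : σ₂^2 ≤ 1 := by linarith
    have hv := Real.sqrt_nonneg (1 - σ₂^2)
    have hvv : Real.sqrt (1-σ₂^2) ≤ 1 := sqrt_le_one' (by nlinarith [sq_nonneg σ₂])
    have hhalf : 1/2 ≤ Real.sqrt (1-σ₂^2) := sqrt_ge_half (by linarith)
    have hos := one_sub_sqrt_le (by positivity) hu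
    refine ⟨(Real.sqrt (1-σ₂^2) - 1, σ₂),
      ⟨⟨by simp only [Prod.fst]; linarith, by simp only [Prod.fst]; linarith⟩, hs2, ?_⟩, ?_⟩
    · right; left
      have : Real.sqrt (1-σ₂^2) - 1 + 1 = Real.sqrt (1-σ₂^2) := by ring
      rw [this, Real.sq_sqrt (by linarith : (0:ℝ) ≤ 1-σ₂^2)]; ring
    · have : Real.sqrt ((σ₁ - (Real.sqrt (1-σ₂^2) - 1))^2 + (σ₂ - σ₂)^2)
          = |σ₁ - (Real.sqrt (1-σ₂^2) - 1)| := by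
        rw [sub_self, show (σ₁ - (Real.sqrt (1-σ₂^2) - 1))^2 + (0:ℝ)^2
          = (σ₁ - (Real.sqrt (1-σ₂^2) - 1))^2 by ring, Real.sqrt_sq_eq_abs]
      rw [this, abs_le]
      constructor <;> nlinarith
  · -- n = 0
    push_cast at habs
    have hσ1sq : σ₁^2 ≤ 1/4 := by nlinarith
    have h34 : (3:ℝ)/4 ≤ 1 - σ₁^2 := by linarith
    have hv := Real.sqrt_nonneg (1 - σ₁^2)
    have hhalf : 1/2 ≤ Real.sqrt (1-σ₁^2) := sqrt_ge_half (by linarith)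
    have hsq : Real.sqrt (1-σ₁^2)^2 = 1 - σ₁^2 := Real.sq_sqrt (by linarith)
    refine ⟨(σ₁, Real.sqrt (1-σ₁^2)), ⟨⟨hs1a, hs1b⟩, hv, ?_⟩, ?_⟩
    · left; rw [hsq]; ring
    · have : Real.sqrt ((σ₁ - σ₁)^2 + (σ₂ - Real.sqrt (1-σ₁^2))^2)
          = |σ₂ - Real.sqrt (1-σ₁^2)| := by
        rw [sub_self, show (0:ℝ)^2 + (σ₂ - Real.sqrt (1-σ₁^2))^2
          = (σ₂ - Real.sqrt (1-σ₁^2))^2 by ring, Real.sqrt_sq_eq_abs]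
      rw [this]
      apply abs_diff_le hs2 hv (by linarith)
      rw [hsq, abs_le]
      constructor <;> nlinarith
  · -- n = 1
    push_cast at habs
    rcases le_or_gt σ₁ (-1/4) with hc | hc
    · have h1 : (σ₁+1)^2 ≤ 9/16 := by nlinarith
      have h2 : (7:ℝ)/16 ≤ 1 - (σ₁+1)^2 := by linarith
      have hv := Real.sqrt_nonneg (1 - (σ₁+1)^2)
      have hhalf : 1/2 ≤ Real.sqrt (1-(σ₁+1)^2) := sqrt_ge_half (by linarith)
      have hsq : Real.sqrt (1-(σ₁+1)^2)^2 = 1 - (σ₁+1)^2 := Real.sq_sqrt (by linarith)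
      refine ⟨(σ₁, Real.sqrt (1-(σ₁+1)^2)), ⟨⟨hs1a, hs1b⟩, hv, ?_⟩, ?_⟩
      · right; left; rw [hsq]; ring
      · have : Real.sqrt ((σ₁ - σ₁)^2 + (σ₂ - Real.sqrt (1-(σ₁+1)^2))^2)
            = |σ₂ - Real.sqrt (1-(σ₁+1)^2)| := by
          rw [sub_self, show (0:ℝ)^2 + (σ₂ - Real.sqrt (1-(σ₁+1)^2))^2
            = (σ₂ - Real.sqrt (1-(σ₁+1)^2))^2 by ring, Real.sqrt_sq_eq_abs]
        rw [this]
        apply abs_diff_le hs2 hv (by linarith)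
        rw [hsq, abs_le]
        obtain ⟨ha1, ha2⟩ := habs
        ring_nf at ha1 ha2 ⊢
        constructor <;> linarith
    · have h1 : (9:ℝ)/16 ≤ (σ₁+1)^2 := by nlinarith
      have hσ2 : σ₂^2 ≤ 3/4 := by nlinarith
      have hv := Real.sqrt_nonneg (1 - σ₂^2)
      have hvv : Real.sqrt (1-σ₂^2) ≤ 1 := sqrt_le_one' (by nlinarith [sq_nonneg σ₂])
      have hhalf : 1/2 ≤ Real.sqrt (1-σ₂^2) := sqrt_ge_half (by linarith)
      have hsq : Real.sqrt (1-σ₂^2)^2 = 1 - σ₂^2 := Real.sq_sqrt (by linarith)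
      refine ⟨(Real.sqrt (1-σ₂^2) - 1, σ₂),
        ⟨⟨by simp only [Prod.fst]; linarith, by simp only [Prod.fst]; linarith⟩, hs2, ?_⟩, ?_⟩
      · right; left
        have : Real.sqrt (1-σ₂^2) - 1 + 1 = Real.sqrt (1-σ₂^2) := by ring
        rw [this, hsq]; ring
      · have hone : (1:ℝ) - σ₂^2 ≤ 1 := by nlinarith [sq_nonneg σ₂]
        have : Real.sqrt ((σ₁ - (Real.sqrt (1-σ₂^2) - 1))^2 + (σ₂ - σ₂)^2)
            = |σ₁ - (Real.sqrt (1-σ₂^2) - 1)| := by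
          rw [sub_self, show (σ₁ - (Real.sqrt (1-σ₂^2) - 1))^2 + (0:ℝ)^2
            = (σ₁ - (Real.sqrt (1-σ₂^2) - 1))^2 by ring, Real.sqrt_sq_eq_abs]
        rw [this]
        have heq : σ₁ - (Real.sqrt (1-σ₂^2) - 1) = (σ₁+1) - Real.sqrt (1-σ₂^2) := by ring
        rw [heq]
        apply abs_diff_le (by linarith) hv (by linarith)
        rw [hsq, abs_le]
        constructor <;> nlinarith

end BlochAux

set_option maxHeartbeats 1000000 in
theorem BlochAux.main_aux (K : ℝ) (hK : 0 < K) :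
    ∃ ε₁ > (0 : ℝ), ∃ Cstar > (0 : ℝ),
      ∀ ε ∈ Set.Ioc (0 : ℝ) ε₁, ∀ ω ∈ Set.Ioo (-(1 : ℝ) / 2) (1 / 2),
        ∀ q : ℝ → ℝ, ContDiff ℝ (⊤ : ℕ∞) q → (∀ x, q (x + 2 * π) = q x) →
          (∀ x, |q x| ≤ K * ε) →
        ∀ σ₁ σ₂ : ℝ, σ₁ ∈ Set.Icc (-(1 : ℝ) / 2) 0 → 0 ≤ σ₂ →
        ∀ lam : ℝ, 0 ≤ lam → IsBlochEigenvalue ε ω σ₁ σ₂ q lam →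
          ∃ τ ∈ S0, Real.sqrt ((σ₁ - τ.1) ^ 2 + (σ₂ - τ.2) ^ 2) < Cstar * Real.sqrt ε := by
  classical
  set C0 : ℝ := Real.sqrt K + 3 with hC0
  have hC0pos : 0 < C0 := by positivity
  refine ⟨min (min (1/4) (1/(16*K))) (1/(16*C0^2)), by positivity, 4*C0, by positivity, ?_⟩
  intro ε hε ω hω q hq hqper hqb σ₁ σ₂ hσ1 hσ2 lam hlam heigen
  obtain ⟨hε0, hε1⟩ := hε
  have hεa : ε ≤ 1/4 := le_trans hε1 (le_trans (min_le_left _ _) (min_le_left _ _))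
  have hεb : ε ≤ 1/(16*K) := le_trans hε1 (le_trans (min_le_left _ _) (min_le_right _ _))
  have hεc : ε ≤ 1/(16*C0^2) := le_trans hε1 (min_le_right _ _)
  obtain ⟨W, hW, hpW, hWne, heig⟩ := heigen
  obtain ⟨n, hn⟩ := BlochAux.exists_mode (hW.of_le (by simp)) hpW hWne hq.continuous hqper
    hqb hlam heig
  have hKε : K*ε ≤ 1/16 := by
    have h1 : K * ε ≤ K * (1/(16*K)) := mul_le_mul_of_nonneg_left hεb hK.le
    have h2 : K * (1/(16*K)) = 1/16 := by field_simp
    linarith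
  have hm : |BlochAux.mSym ε ω σ₁ σ₂ n| ≤ Real.sqrt (K*ε) := by
    rw [← Real.sqrt_sq_eq_abs]; exact Real.sqrt_le_sqrt hn
  have hsKε : Real.sqrt (K*ε) ≤ 1/4 := by
    have := Real.sqrt_le_sqrt hKε
    rwa [show (1:ℝ)/16 = (1/4)^2 by norm_num, Real.sqrt_sq (by norm_num)] at this
  have hm4 : |BlochAux.mSym ε ω σ₁ σ₂ n| ≤ 1/4 := le_trans hm hsKε
  obtain ⟨hω1, hω2⟩ := hω
  obtain ⟨hσ1a, hσ1b⟩ := hσ1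
  have hfac : 3/4 ≤ 1+2*ε*ω := by nlinarith
  have hsq94 : ((n:ℝ)+σ₁)^2 < 9/4 := by
    by_contra hcontra
    push_neg at hcontra
    have h1 : (3/4 : ℝ) * (9/4) ≤ (1+2*ε*ω) * (((n:ℝ)+σ₁)^2) :=
      mul_le_mul hfac hcontra (by norm_num) (by linarith)
    have habs := (abs_le.mp hm4).1
    unfold BlochAux.mSym at habs
    nlinarith [sq_nonneg σ₂]
  have hn32 : |(n:ℝ)+σ₁| < 3/2 := by
    nlinarith [abs_nonneg ((n:ℝ)+σ₁), sq_abs ((n:ℝ)+σ₁)]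
  obtain ⟨hlo, hhi⟩ := abs_lt.mp hn32
  have hn1 : -1 ≤ n := by
    have h1 : (-2:ℝ) < (n:ℝ) := by linarith
    have h2 : (-2:ℤ) < n := by exact_mod_cast h1
    omega
  have hn2 : n ≤ 1 := by
    have h1 : (n:ℝ) < 2 := by linarith
    have h2 : n < (2:ℤ) := by exact_mod_cast h1
    omega
  have hsε : 0 < Real.sqrt ε := Real.sqrt_pos.mpr hε0
  have hε12 : Real.sqrt ε ≤ 1/2 := by
    have := Real.sqrt_le_sqrt hεa
    rwa [show (1:ℝ)/4 = (1/2)^2 by norm_num, Real.sqrt_sq (by norm_num)] at this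
  have hεsq : ε ≤ Real.sqrt ε * (1/2) := by
    have h1 : ε = Real.sqrt ε * Real.sqrt ε := (Real.mul_self_sqrt hε0.le).symm
    nlinarith
  have hsplit : Real.sqrt (K*ε) = Real.sqrt K * Real.sqrt ε := Real.sqrt_mul hK.le ε
  have hωabs : |ω| ≤ 1/2 := by rw [abs_le]; constructor <;> linarith
  have hδbound : |((n:ℝ)+σ₁)^2 + σ₂^2 - 1| ≤ C0 * Real.sqrt ε := by
    have hid : ((n:ℝ)+σ₁)^2 + σ₂^2 - 1
        = -(BlochAux.mSym ε ω σ₁ σ₂ n) + -(2*ε*ω*(((n:ℝ)+σ₁)^2)) := by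
      unfold BlochAux.mSym; ring
    have htri := abs_add_le (-(BlochAux.mSym ε ω σ₁ σ₂ n)) (-(2*ε*ω*(((n:ℝ)+σ₁)^2)))
    rw [abs_neg, abs_neg] at htri
    have hb2 : |2*ε*ω*(((n:ℝ)+σ₁)^2)| ≤ ε * (9/4) := by
      have hX : (0:ℝ) ≤ ((n:ℝ)+σ₁)^2 := sq_nonneg _
      rw [abs_mul, abs_mul, abs_mul, abs_of_nonneg hε0.le, abs_of_nonneg hX,
        abs_two]
      have hprod : |ω| * (((n:ℝ)+σ₁)^2) ≤ (1/2) * (9/4) :=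
        mul_le_mul hωabs hsq94.le hX (by norm_num)
      nlinarith [abs_nonneg ω, hε0.le]
    have hchain : |((n:ℝ)+σ₁)^2 + σ₂^2 - 1|
        ≤ Real.sqrt K * Real.sqrt ε + ε * (9/4) := by
      rw [hid]
      calc |(-(BlochAux.mSym ε ω σ₁ σ₂ n)) + -(2*ε*ω*(((n:ℝ)+σ₁)^2))|
          ≤ |BlochAux.mSym ε ω σ₁ σ₂ n| + |2*ε*ω*(((n:ℝ)+σ₁)^2)| := htri
        _ ≤ Real.sqrt K * Real.sqrt ε + ε * (9/4) := by
            rw [← hsplit]; exact add_le_add hm hb2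
    have : ε * (9/4) ≤ Real.sqrt ε * (9/8) := by nlinarith
    calc |((n:ℝ)+σ₁)^2 + σ₂^2 - 1| ≤ Real.sqrt K * Real.sqrt ε + ε * (9/4) := hchain
      _ ≤ Real.sqrt K * Real.sqrt ε + Real.sqrt ε * (9/8) := by linarith
      _ ≤ C0 * Real.sqrt ε := by rw [hC0]; nlinarith
  have hδ14 : C0 * Real.sqrt ε ≤ 1/4 := by
    have h1 : Real.sqrt ε ≤ Real.sqrt (1/(16*C0^2)) := Real.sqrt_le_sqrt hεc
    have h2 : Real.sqrt (1/(16*C0^2)) = 1/(4*C0) := by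
      rw [show 1/(16*C0^2) = (1/(4*C0))^2 by field_simp; ring, Real.sqrt_sq (by positivity)]
    have h3 : Real.sqrt ε ≤ 1/(4*C0) := by rw [← h2]; exact h1
    have h4 : C0 * Real.sqrt ε ≤ C0 * (1/(4*C0)) := mul_le_mul_of_nonneg_left h3 hC0pos.le
    have h5 : C0 * (1/(4*C0)) = 1/4 := by field_simp
    linarith
  obtain ⟨τ, hτ, hdist⟩ := BlochAux.geom hn1 hn2 ⟨hσ1a, hσ1b⟩ hσ2 (by positivity) hδ14 hδbound
  refine ⟨τ, hτ, ?_⟩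
  calc Real.sqrt ((σ₁ - τ.1)^2 + (σ₂ - τ.2)^2) ≤ 2*(C0 * Real.sqrt ε) := hdist
    _ < 4*C0 * Real.sqrt ε := by nlinarith

/-- All unstable Bloch wave vectors lie within distance `O(√ε)` of `S₀`. -/
theorem unstable_modes_near_S0 (b s K : ℝ) (hK : 0 < K) :
    ∃ ε₁ > (0 : ℝ), ∃ Cstar > (0 : ℝ),
      ∀ ε ∈ Set.Ioc (0 : ℝ) ε₁, ∀ ω ∈ Set.Ioo (-(1 : ℝ) / 2) (1 / 2),
        ∀ q : ℝ → ℝ, ContDiff ℝ (⊤ : ℕ∞) q → (∀ x, q (x + 2 * π) = q x) →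
          (∀ x, |q x| ≤ K * ε) →
        ∀ σ₁ σ₂ : ℝ, σ₁ ∈ Set.Icc (-(1 : ℝ) / 2) 0 → 0 ≤ σ₂ →
        ∀ lam : ℝ, 0 ≤ lam → IsBlochEigenvalue ε ω σ₁ σ₂ q lam →
          ∃ τ ∈ S0, Real.sqrt ((σ₁ - τ.1) ^ 2 + (σ₂ - τ.2) ^ 2) < Cstar * Real.sqrt ε :=
  BlochAux.main_aux K hK

end
end

section
/- Let λ_M > 0, let j ≥ 2 be an integer, and let δ ≥ 0 satisfy j·δ ≤ (j−1)λ_M/2. Let e : [0,∞) → (0,∞) be differentiable with |e'(t)| ≤ δ·e(t) for all t ≥ 0. Then for all t ≥ 0, ∫₀^t e^{(j−1)λ_M s} e(s)^j ds ≤ (2/((j−1)λ_M)) e^{(j−1)λ_M t} e(t)^j. Consequently, if K, C > 0 and u : [0,∞) → [0,∞) satisfies u(t) ≤ C ∫₀^t e^{λ_M (t−s)} K (e^{λ_M s} e(s))^j ds for all t ≥ 0, then u(t) ≤ (2CK/((j−1)λ_M)) (e^{λ_M t} e(t))^j for all t ≥ 0. -/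
/-!
With `a = (j - 1) λ_M`, the function `g s = exp (a s) e(s)^j` satisfies
`g' = exp (a s) (a e^j + j e^(j-1) e') ≥ (a - j δ) g ≥ (a / 2) g`, because `|e'| ≤ δ e`.
Integrating `g ≤ (2 / a) g'` gives `∫₀ᵗ g ≤ (2 / a) (g t - g 0) ≤ (2 / a) g t`.
The Duhamel integral factors as `K exp (λ_M t) ∫₀ᵗ g`, which yields the second bound.
-/

open Real MeasureTheory Set

theorem integral_le_div_of_mul_le_deriv {f f' : ℝ → ℝ} {a b c : ℝ} (hab : a ≤ b) (hc : 0 < c)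
    (hcont : ContinuousOn f (Icc a b)) (hderiv : ∀ x ∈ Ioo a b, HasDerivAt f (f' x) x)
    (hle : ∀ x ∈ Ioo a b, c * f x ≤ f' x) (ha : 0 ≤ f a) :
    ∫ x in a..b, f x ≤ f b / c := by
  have hFTC := intervalIntegral.integral_le_sub_of_hasDeriv_right_of_le hab hcont
    (fun x hx => (hderiv x hx).hasDerivWithinAt) (hcont.const_mul c).integrableOn_Icc hle
  rw [intervalIntegral.integral_const_mul] at hFTC
  rw [le_div_iff₀ hc]
  linarith

theorem neg_mul_pow_le_mul_pow_sub_one_mul (n : ℕ) {x d δ : ℝ} (hx : 0 < x)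
    (hd : |d| ≤ δ * x) : -(n * δ) * x ^ n ≤ n * x ^ (n - 1) * d := by
  rcases n with _ | n
  · simp
  have hd' : -(δ * x) ≤ d := neg_le_of_abs_le hd
  calc -((n + 1 : ℕ) * δ) * x ^ (n + 1) = (n + 1 : ℕ) * x ^ n * -(δ * x) := by ring
    _ ≤ (n + 1 : ℕ) * x ^ (n + 1 - 1) * d := by
      rw [Nat.add_sub_cancel]
      gcongr

theorem integral_exp_mul_pow_le {e e' : ℝ → ℝ} {c δ t : ℝ} (n : ℕ) (hδ : n * δ < c)
    (ht : 0 ≤ t) (hepos : ∀ s ∈ Icc 0 t, 0 < e s) (hcont : ContinuousOn e (Icc 0 t))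
    (hderiv : ∀ s ∈ Ioo 0 t, HasDerivAt e (e' s) s)
    (hde : ∀ s ∈ Ioo 0 t, |e' s| ≤ δ * e s) :
    ∫ s in (0 : ℝ)..t, exp (c * s) * e s ^ n ≤ exp (c * t) * e t ^ n / (c - n * δ) := by
  refine integral_le_div_of_mul_le_deriv ht (by linarith)
    ((continuous_exp.comp (continuous_const_mul c)).continuousOn.mul (hcont.pow n))
    (f' := fun s => exp (c * s) * (c * e s ^ n + n * e s ^ (n - 1) * e' s))
    (fun s hs => ?_) (fun s hs => ?_) (by have := hepos 0 ⟨le_rfl, ht⟩; positivity)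
  · exact (((hasDerivAt_id' s).const_mul c).exp.mul ((hderiv s hs).fun_pow n)).congr_deriv
      (by ring)
  · have hes := hepos s (Ioo_subset_Icc_self hs)
    have := neg_mul_pow_le_mul_pow_sub_one_mul n hes (hde s hs)
    have hexp := exp_pos (c * s)
    nlinarith

theorem intervalIntegral_duhamel_eq (lam K t : ℝ) (j : ℕ) (e : ℝ → ℝ) :
    ∫ s in (0 : ℝ)..t, exp (lam * (t - s)) * K * (exp (lam * s) * e s) ^ j =
      K * exp (lam * t) * ∫ s in (0 : ℝ)..t, exp (((j : ℝ) - 1) * lam * s) * e s ^ j := by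
  rw [← intervalIntegral.integral_const_mul]
  congr 1 with s
  rw [mul_pow, ← exp_nat_mul]
  have hexp : exp (lam * (t - s)) * exp (j * (lam * s)) =
      exp (lam * t) * exp (((j : ℝ) - 1) * lam * s) := by
    rw [← exp_add, ← exp_add]
    ring_nf
  linear_combination (K * e s ^ j) * hexp

theorem duhamel_growth_bound_general (lamM : ℝ) (hlamM : 0 < lamM) (j : ℕ) (hj : 2 ≤ j)
    (δ : ℝ) (hjδ : (j : ℝ) * δ ≤ ((j : ℝ) - 1) * lamM / 2)
    (e : ℝ → ℝ) (hepos : ∀ t : ℝ, 0 ≤ t → 0 < e t)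
    (hediff : ∀ t : ℝ, 0 ≤ t → DifferentiableWithinAt ℝ e (Set.Ici 0) t)
    (hde : ∀ t : ℝ, 0 ≤ t → |derivWithin e (Set.Ici 0) t| ≤ δ * e t) :
    (∀ t : ℝ, 0 ≤ t →
      ∫ s in (0 : ℝ)..t, Real.exp (((j : ℝ) - 1) * lamM * s) * (e s) ^ j ≤
        (2 / (((j : ℝ) - 1) * lamM)) * Real.exp (((j : ℝ) - 1) * lamM * t) * (e t) ^ j) ∧
    ∀ K C : ℝ, 0 < K → 0 < C →
      ∀ u : ℝ → ℝ, (∀ t : ℝ, 0 ≤ t → 0 ≤ u t) →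
        (∀ t : ℝ, 0 ≤ t →
          u t ≤ C * ∫ s in (0 : ℝ)..t,
            Real.exp (lamM * (t - s)) * K * (Real.exp (lamM * s) * e s) ^ j) →
        ∀ t : ℝ, 0 ≤ t →
          u t ≤ (2 * C * K / (((j : ℝ) - 1) * lamM)) * (Real.exp (lamM * t) * e t) ^ j := by
  set a := ((j : ℝ) - 1) * lamM with ha
  have ha0 : 0 < a := mul_pos (by linarith [(Nat.ofNat_le_cast.mpr hj : (2 : ℝ) ≤ j)]) hlamM
  clear_value a
  have hbound : ∀ t, 0 ≤ t → ∫ s in (0 : ℝ)..t, exp (a * s) * e s ^ j ≤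
      2 / a * exp (a * t) * e t ^ j := fun t ht => by
    refine (integral_exp_mul_pow_le j (by linarith) ht (fun s hs => hepos s hs.1)
      (fun s hs => (hediff s hs.1).continuousWithinAt.mono Icc_subset_Ici_self)
      (fun s hs => (hediff s hs.1.le).hasDerivWithinAt.hasDerivAt (Ici_mem_nhds hs.1))
      (fun s hs => hde s hs.1.le)).trans ?_
    have hpos : 0 ≤ exp (a * t) * e t ^ j := by have := hepos t ht; positivity
    calc exp (a * t) * e t ^ j / (a - j * δ) ≤ exp (a * t) * e t ^ j / (a / 2) := by
          gcongr; linarith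
      _ = 2 / a * exp (a * t) * e t ^ j := by ring
  refine ⟨hbound, fun K C hK hC u _ hu t ht => (hu t ht).trans ?_⟩
  rw [intervalIntegral_duhamel_eq, ← ha, mul_pow, ← exp_nat_mul,
    show (j : ℝ) * (lamM * t) = lamM * t + a * t by rw [ha]; ring, exp_add]
  calc C * (K * exp (lamM * t) * ∫ s in (0 : ℝ)..t, exp (a * s) * e s ^ j)
      ≤ C * (K * exp (lamM * t) * (2 / a * exp (a * t) * e t ^ j)) := by
        gcongr
        exact hbound t ht
    _ = 2 * C * K / a * (exp (lamM * t) * exp (a * t) * e t ^ j) := by ring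

/-- Growth bound for the Duhamel integral against an almost-constant prefactor `e(t)`. -/
theorem duhamel_growth_bound (lamM : ℝ) (hlamM : 0 < lamM) (j : ℕ) (hj : 2 ≤ j)
    (δ : ℝ) (hδ : 0 ≤ δ) (hjδ : (j : ℝ) * δ ≤ ((j : ℝ) - 1) * lamM / 2)
    (e : ℝ → ℝ) (hepos : ∀ t : ℝ, 0 ≤ t → 0 < e t)
    (hediff : ∀ t : ℝ, 0 ≤ t → DifferentiableWithinAt ℝ e (Set.Ici 0) t)
    (hde : ∀ t : ℝ, 0 ≤ t → |derivWithin e (Set.Ici 0) t| ≤ δ * e t) :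
    (∀ t : ℝ, 0 ≤ t →
      ∫ s in (0 : ℝ)..t, Real.exp (((j : ℝ) - 1) * lamM * s) * (e s) ^ j ≤
        (2 / (((j : ℝ) - 1) * lamM)) * Real.exp (((j : ℝ) - 1) * lamM * t) * (e t) ^ j) ∧
    ∀ K C : ℝ, 0 < K → 0 < C →
      ∀ u : ℝ → ℝ, (∀ t : ℝ, 0 ≤ t → 0 ≤ u t) →
        (∀ t : ℝ, 0 ≤ t →
          u t ≤ C * ∫ s in (0 : ℝ)..t,
            Real.exp (lamM * (t - s)) * K * (Real.exp (lamM * s) * e s) ^ j) →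
        ∀ t : ℝ, 0 ≤ t →
          u t ≤ (2 * C * K / (((j : ℝ) - 1) * lamM)) * (Real.exp (lamM * t) * e t) ^ j :=
  duhamel_growth_bound_general lamM hlamM j hj δ hjδ e hepos hediff hde
end

section
/- Let C₁ > 0 and α, s̃ ≥ 0. Define a sequence (C_j)_{j≥1} of positive reals with first term C₁ by C₂ := α·C₁², and for j ≥ 3, C_j := α·Σ_{k+p=j, k,p≥1} C_k C_p + s̃·Σ_{k+p+q=j, k,p,q≥1} C_k C_p C_q. Then there exists ρ > 0 such that C_j ≤ ρ^j for all j ≥ 1. -/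
/-!
Inverse squares are almost closed under convolution: since
`1/(k²p²) ≤ 2(1/k² + 1/p²)/(k+p)²` and `∑ 1/k² ≤ 2`, one has `∑_{k+p=j} 1/(k²p²) ≤ 8/j²`, and
iterating, `∑_{k+p+q=j} 1/(k²p²q²) ≤ 64/j²`. Hence the majorant `A ρ^j / j²` reproduces itself
under the recurrence up to the factor `8αA + 64s̃A²`, which is at most `1` for small `A`. Choosing
`ρ` large enough to cover `C₁` and `C₂`, strong induction gives `C_j ≤ A ρ^j / j² ≤ ρ^j`.
-/

open Finset

section Convolution

variable {R : Type*} [CommSemiring R]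

def convSq (f : ℕ → R) (j : ℕ) : R :=
  ∑ k ∈ Ico 1 j, f k * f (j - k)

def convCube (f : ℕ → R) (j : ℕ) : R :=
  ∑ k ∈ Ico 1 j, ∑ p ∈ Ico 1 (j - k), f k * f p * f (j - k - p)

theorem convCube_eq_sum_mul_convSq (f : ℕ → R) (j : ℕ) :
    convCube f j = ∑ k ∈ Ico 1 j, f k * convSq f (j - k) := by
  simp only [convCube, convSq, mul_sum, mul_assoc]

theorem convSq_geom_mul (c r : R) (w : ℕ → R) (j : ℕ) :
    convSq (fun k => c * r ^ k * w k) j = c ^ 2 * r ^ j * convSq w j := by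
  rw [convSq, convSq, mul_sum]
  refine sum_congr rfl fun k hk => ?_
  have hkj : k + (j - k) = j := by grind
  rw [← hkj, pow_add]
  simp only [hkj]
  ring

theorem convCube_geom_mul (c r : R) (w : ℕ → R) (j : ℕ) :
    convCube (fun k => c * r ^ k * w k) j = c ^ 3 * r ^ j * convCube w j := by
  rw [convCube, convCube, mul_sum]
  refine sum_congr rfl fun k hk => ?_
  rw [mul_sum]
  refine sum_congr rfl fun p hp => ?_
  have hkpj : k + p + (j - k - p) = j := by grind
  rw [← hkpj, pow_add, pow_add]
  simp only [hkpj]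
  ring

variable [PartialOrder R] [IsOrderedRing R]

theorem convSq_le_convSq {f g : ℕ → R} {j : ℕ} (hf : ∀ k ∈ Ico 1 j, 0 ≤ f k)
    (hfg : ∀ k ∈ Ico 1 j, f k ≤ g k) : convSq f j ≤ convSq g j := by
  refine sum_le_sum fun k hk => ?_
  have hjk : j - k ∈ Ico 1 j := by grind
  exact mul_le_mul (hfg k hk) (hfg _ hjk) (hf _ hjk) ((hf k hk).trans (hfg k hk))

theorem convCube_le_convCube {f g : ℕ → R} {j : ℕ} (hf : ∀ k ∈ Ico 1 j, 0 ≤ f k)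
    (hfg : ∀ k ∈ Ico 1 j, f k ≤ g k) : convCube f j ≤ convCube g j := by
  refine sum_le_sum fun k hk => sum_le_sum fun p hp => ?_
  have hp' : p ∈ Ico 1 j := by grind
  have hq : j - k - p ∈ Ico 1 j := by grind
  have hg0 : ∀ i ∈ Ico 1 j, 0 ≤ g i := fun i hi => (hf i hi).trans (hfg i hi)
  exact mul_le_mul (mul_le_mul (hfg k hk) (hfg p hp') (hf p hp') (hg0 k hk)) (hfg _ hq) (hf _ hq)
    (mul_nonneg (hg0 k hk) (hg0 p hp'))

end Convolution

section InverseSquares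

variable {K : Type*} [Field K] [LinearOrder K] [IsStrictOrderedRing K]

theorem inv_sq_mul_inv_sq_le {a b : K} (ha : 0 < a) (hb : 0 < b) :
    (a ^ 2)⁻¹ * (b ^ 2)⁻¹ ≤ 2 * ((a ^ 2)⁻¹ + (b ^ 2)⁻¹) / (a + b) ^ 2 := by
  rw [le_div_iff₀ (by positivity)]
  field_simp
  nlinarith [sq_nonneg (a - b)]

theorem sum_Ico_one_inv_sq_le_two (n : ℕ) : ∑ k ∈ Ico 1 n, ((k : K) ^ 2)⁻¹ ≤ 2 := by
  have h := sum_Ioo_inv_sq_le (α := K) 0 n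
  rw [← Ico_add_one_left_eq_Ioo] at h
  simpa using h

theorem convSq_inv_sq_le (j : ℕ) : convSq (fun k => ((k : K) ^ 2)⁻¹) j ≤ 8 / (j : K) ^ 2 := by
  set w : ℕ → K := fun k => ((k : K) ^ 2)⁻¹
  have hpoint : ∀ k ∈ Ico 1 j, w k * w (j - k) ≤ 2 * (w k + w (j - k)) / (j : K) ^ 2 := by
    intro k hk
    have hkj : k ≤ j := by grind
    have hsum : (k : K) + ((j - k : ℕ) : K) = j := by rw [Nat.cast_sub hkj]; ring
    rw [← hsum]
    exact inv_sq_mul_inv_sq_le (by simp; grind) (by simp; grind)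
  have hreflect : ∑ k ∈ Ico 1 j, w (j - k) = ∑ k ∈ Ico 1 j, w k := by
    rw [sum_Ico_reflect w 1 (Nat.le_succ j)]
    simp
  calc convSq w j ≤ ∑ k ∈ Ico 1 j, 2 * (w k + w (j - k)) / (j : K) ^ 2 := sum_le_sum hpoint
    _ = 4 / (j : K) ^ 2 * ∑ k ∈ Ico 1 j, w k := by
      simp only [← sum_div, ← mul_sum, sum_add_distrib, hreflect]
      ring
    _ ≤ 4 / (j : K) ^ 2 * 2 := by gcongr; exact sum_Ico_one_inv_sq_le_two j
    _ = 8 / (j : K) ^ 2 := by ring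

theorem convCube_inv_sq_le (j : ℕ) : convCube (fun k => ((k : K) ^ 2)⁻¹) j ≤ 64 / (j : K) ^ 2 := by
  set w : ℕ → K := fun k => ((k : K) ^ 2)⁻¹
  calc convCube w j = ∑ k ∈ Ico 1 j, w k * convSq w (j - k) := convCube_eq_sum_mul_convSq w j
    _ ≤ ∑ k ∈ Ico 1 j, w k * (8 * w (j - k)) := by
      gcongr with k
      exact (convSq_inv_sq_le _).trans_eq (div_eq_mul_inv _ _)
    _ = 8 * convSq w j := by simp only [convSq, mul_sum]; ring_nf
    _ ≤ 8 * (8 / (j : K) ^ 2) := by gcongr; exact convSq_inv_sq_le j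
    _ = 64 / (j : K) ^ 2 := by ring

theorem mul_inv_add_mul_inv_sq_le_one {a b : K} (ha : 0 ≤ a) (hb : 0 ≤ b) :
    a * (1 + a + b)⁻¹ + b * (1 + a + b)⁻¹ ^ 2 ≤ 1 := by
  have hB : 1 ≤ 1 + a + b := by linarith
  have hsq : (1 + a + b)⁻¹ ^ 2 ≤ (1 + a + b)⁻¹ :=
    pow_le_of_le_one (by positivity) (inv_le_one_of_one_le₀ hB) two_ne_zero
  calc a * (1 + a + b)⁻¹ + b * (1 + a + b)⁻¹ ^ 2 ≤ (a + b) * (1 + a + b)⁻¹ := by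
        rw [add_mul]; gcongr
    _ ≤ (1 + a + b) * (1 + a + b)⁻¹ := by gcongr; linarith
    _ = 1 := mul_inv_cancel₀ (by positivity)

end InverseSquares

theorem le_mul_pow_mul_inv_sq_of_le_convSq_add_convCube {K : Type*} [Field K] [LinearOrder K]
    [IsStrictOrderedRing K] {C : ℕ → K} {α st A ρ : K} (hα : 0 ≤ α) (hst : 0 ≤ st) (hA : 0 ≤ A)
    (hρ : 0 ≤ ρ) (hA_small : 8 * α * A + 64 * st * A ^ 2 ≤ 1) (hC : ∀ j, 1 ≤ j → 0 ≤ C j)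
    (hbase : ∀ j, 1 ≤ j → j < 3 → C j ≤ A * ρ ^ j * ((j : K) ^ 2)⁻¹)
    (hrec : ∀ j, 3 ≤ j → C j ≤ α * convSq C j + st * convCube C j) :
    ∀ j, 1 ≤ j → C j ≤ A * ρ ^ j * ((j : K) ^ 2)⁻¹ := by
  intro j
  induction j using Nat.strong_induction_on with
  | _ j ih =>
  intro hj
  rcases lt_or_ge j 3 with hj3 | hj3
  · exact hbase j hj hj3
  set w : ℕ → K := fun k => ((k : K) ^ 2)⁻¹
  have hC0 : ∀ k ∈ Ico 1 j, 0 ≤ C k := fun k hk => hC k (mem_Ico.1 hk).1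
  have hCb : ∀ k ∈ Ico 1 j, C k ≤ A * ρ ^ k * w k := fun k hk =>
    ih k (mem_Ico.1 hk).2 (mem_Ico.1 hk).1
  have hsq : convSq C j ≤ A ^ 2 * ρ ^ j * (8 * w j) := by
    calc convSq C j ≤ convSq (fun k => A * ρ ^ k * w k) j := convSq_le_convSq hC0 hCb
      _ = A ^ 2 * ρ ^ j * convSq w j := convSq_geom_mul A ρ w j
      _ ≤ A ^ 2 * ρ ^ j * (8 * w j) := by
        gcongr; exact (convSq_inv_sq_le j).trans_eq (div_eq_mul_inv _ _)
  have hcube : convCube C j ≤ A ^ 3 * ρ ^ j * (64 * w j) := by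
    calc convCube C j ≤ convCube (fun k => A * ρ ^ k * w k) j := convCube_le_convCube hC0 hCb
      _ = A ^ 3 * ρ ^ j * convCube w j := convCube_geom_mul A ρ w j
      _ ≤ A ^ 3 * ρ ^ j * (64 * w j) := by
        gcongr; exact (convCube_inv_sq_le j).trans_eq (div_eq_mul_inv _ _)
  have hb : 0 ≤ A * ρ ^ j * w j := by positivity
  calc C j ≤ α * convSq C j + st * convCube C j := hrec j hj3
    _ ≤ α * (A ^ 2 * ρ ^ j * (8 * w j)) + st * (A ^ 3 * ρ ^ j * (64 * w j)) := by gcongr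
    _ = (8 * α * A + 64 * st * A ^ 2) * (A * ρ ^ j * w j) := by ring
    _ ≤ A * ρ ^ j * w j := mul_le_of_le_one_left hb hA_small

/-- Exponential growth bound for the recursively defined coefficients of the approximate
solution (a Catalan-type recurrence). -/
theorem coefficients_exponential_bound (C1 α st : ℝ) (hC1 : 0 < C1) (hα : 0 ≤ α)
    (hst : 0 ≤ st) (C : ℕ → ℝ)
    (hpos : ∀ j : ℕ, 1 ≤ j → 0 < C j)
    (h1 : C 1 = C1)
    (h2 : C 2 = α * C1 ^ 2)
    (hrec : ∀ j : ℕ, 3 ≤ j →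
      C j = α * ∑ k ∈ Finset.Ico 1 j, C k * C (j - k)
        + st * ∑ k ∈ Finset.Ico 1 j, ∑ p ∈ Finset.Ico 1 (j - k), C k * C p * C (j - k - p)) :
    ∃ ρ > (0 : ℝ), ∀ j : ℕ, 1 ≤ j → C j ≤ ρ ^ j := by
  set B := 1 + 8 * α + 64 * st with hB_def
  have hB : 1 ≤ B := by linarith
  have hA1 : B⁻¹ ≤ 1 := inv_le_one_of_one_le₀ hB
  have hA_small : 8 * α * B⁻¹ + 64 * st * B⁻¹ ^ 2 ≤ 1 :=
    mul_inv_add_mul_inv_sq_le_one (by positivity) (by positivity)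
  have hbase : ∀ j, 1 ≤ j → j < 3 → C j ≤ B⁻¹ * (B ^ 2 * C1) ^ j * ((j : ℝ) ^ 2)⁻¹ := by
    intro j hj hj3
    interval_cases j
    · rw [h1]
      push_cast
      field_simp
      exact hB
    · rw [h2]
      push_cast
      field_simp
      have hB3 : 4 * α ≤ B ^ 3 := by nlinarith [le_self_pow₀ hB (show 3 ≠ 0 by norm_num)]
      nlinarith [mul_le_mul_of_nonneg_right hB3 (sq_nonneg C1)]
  refine ⟨B ^ 2 * C1, by positivity, fun j hj => ?_⟩
  calc C j ≤ B⁻¹ * (B ^ 2 * C1) ^ j * ((j : ℝ) ^ 2)⁻¹ :=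
        le_mul_pow_mul_inv_sq_of_le_convSq_add_convCube hα hst (by positivity) (by positivity)
          hA_small (fun j hj => (hpos j hj).le) hbase (fun j hj => (hrec j hj).le) j hj
    _ ≤ 1 * (B ^ 2 * C1) ^ j * 1 := by
      gcongr
      exact inv_le_one_of_one_le₀ (one_le_pow₀ (by exact_mod_cast hj))
    _ = (B ^ 2 * C1) ^ j := by ring
end
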